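/- Let φ : ℂ → ℂ be holomorphic with φ(0) = 0, and let f₀,…,f_k be holomorphic functions near 0. Then W(f₀∘φ, …, f_k∘φ)(0) = φ'(0)^{k(k+1)/2} · W(f₀,…,f_k)(φ(0)) = φ'(0)^{k(k+1)/2} · W(f₀,…,f_k)(0), where W is the Wronskian determinant of derivatives up to order k evaluated at 0. -/

import Mathlib

/-! By Faà di Bruno, `(f ∘ φ)^{(p)} = ∑_{q ≤ p} c_{p,q} · (f^{(q)} ∘ φ)` with coefficients
`c_{p,q}` depending on `φ` alone, and `c_{p,p} = φ'^p`. Hence the Wronskian matrix of the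
`f_i ∘ φ` is the lower triangular matrix `(c_{p,q})` times the Wronskian matrix of the `f_i` at
`φ z`, and the determinant of the former is `∏_{p ≤ k} φ'^p = φ'^{k(k+1)/2}`. -/

open Finset
open scoped ContDiff

variable {𝕜 : Type*} [NontriviallyNormedField 𝕜] {φ : 𝕜 → 𝕜}

/-- The coefficient of `f^{(q)} ∘ φ` in `(f ∘ φ)^{(p)}`. -/
noncomputable def faaDiBrunoCoeff (φ : 𝕜 → 𝕜) : ℕ → ℕ → 𝕜 → 𝕜
  | 0, q => fun _ => if q = 0 then 1 else 0
  | p + 1, 0 => deriv (faaDiBrunoCoeff φ p 0)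
  | p + 1, q + 1 => deriv (faaDiBrunoCoeff φ p (q + 1)) + deriv φ * faaDiBrunoCoeff φ p q

theorem contDiff_faaDiBrunoCoeff (hφ : ContDiff 𝕜 ∞ φ) :
    ∀ p q, ContDiff 𝕜 ∞ (faaDiBrunoCoeff φ p q)
  | 0, _ => contDiff_const
  | p + 1, 0 => (contDiff_infty_iff_deriv.mp (contDiff_faaDiBrunoCoeff hφ p 0)).2
  | p + 1, q + 1 =>
    (contDiff_infty_iff_deriv.mp (contDiff_faaDiBrunoCoeff hφ p (q + 1))).2.add
      ((contDiff_infty_iff_deriv.mp hφ).2.mul (contDiff_faaDiBrunoCoeff hφ p q))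

theorem faaDiBrunoCoeff_eq_zero_of_lt : ∀ {p q : ℕ}, p < q → faaDiBrunoCoeff φ p q = 0
  | 0, _ + 1, _ => by funext; simp [faaDiBrunoCoeff]
  | p + 1, q + 1, h => by
    simp [faaDiBrunoCoeff, faaDiBrunoCoeff_eq_zero_of_lt (by omega : p < q + 1),
      faaDiBrunoCoeff_eq_zero_of_lt (by omega : p < q)]

theorem faaDiBrunoCoeff_self : ∀ p, faaDiBrunoCoeff φ p p = deriv φ ^ p
  | 0 => by funext; simp [faaDiBrunoCoeff]
  | p + 1 => by
    rw [faaDiBrunoCoeff, faaDiBrunoCoeff_eq_zero_of_lt (Nat.lt_succ_self p), faaDiBrunoCoeff_self p]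
    simp [pow_succ, mul_comm]

theorem deriv_mul_iteratedDeriv_comp {c f : 𝕜 → 𝕜} {z : 𝕜} (q : ℕ)
    (hc : DifferentiableAt 𝕜 c z) (hφ : DifferentiableAt 𝕜 φ z)
    (hf : DifferentiableAt 𝕜 (iteratedDeriv q f) (φ z)) :
    deriv (fun w => c w * iteratedDeriv q f (φ w)) z
      = deriv c z * iteratedDeriv q f (φ z) + deriv φ z * c z * iteratedDeriv (q + 1) f (φ z) := by
  rw [iteratedDeriv_succ]
  exact (hc.hasDerivAt.mul (hf.hasDerivAt.comp z hφ.hasDerivAt)).deriv.trans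
    (by simp only [Function.comp_apply]; ring)

theorem iteratedDeriv_comp_eq_sum (hφ : ContDiff 𝕜 ∞ φ) {f : 𝕜 → 𝕜} (hf : ContDiff 𝕜 ∞ f)
    (p : ℕ) (z : 𝕜) :
    iteratedDeriv p (f ∘ φ) z
      = ∑ q ∈ range (p + 1), faaDiBrunoCoeff φ p q z * iteratedDeriv q f (φ z) := by
  induction p generalizing z with
  | zero => simp [faaDiBrunoCoeff]
  | succ p ih =>
    have hf' q : Differentiable 𝕜 (iteratedDeriv q f) :=
      hf.differentiable_iteratedDeriv q (by exact_mod_cast ENat.natCast_lt_top q)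
    have hc q : Differentiable 𝕜 (faaDiBrunoCoeff φ p q) :=
      (contDiff_faaDiBrunoCoeff hφ p q).differentiable (by simp)
    have hφ' : Differentiable 𝕜 φ := hφ.differentiable (by simp)
    have hterm q :
        DifferentiableAt 𝕜 (fun w => faaDiBrunoCoeff φ p q w * iteratedDeriv q f (φ w)) z :=
      ((hc q).mul ((hf' q).comp hφ')) z
    rw [iteratedDeriv_succ, funext ih, deriv_fun_sum fun q _ => hterm q,
      sum_congr rfl fun q _ => deriv_mul_iteratedDeriv_comp q (hc q z) (hφ' z) (hf' q (φ z)),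
      sum_add_distrib, sum_range_succ' _ (p + 1)]
    have hshift : ∑ q ∈ range (p + 1), deriv (faaDiBrunoCoeff φ p q) z * iteratedDeriv q f (φ z)
        = ∑ q ∈ range (p + 1),
            deriv (faaDiBrunoCoeff φ p (q + 1)) z * iteratedDeriv (q + 1) f (φ z)
          + deriv (faaDiBrunoCoeff φ p 0) z * iteratedDeriv 0 f (φ z) := by
      rw [← sum_range_succ' (fun q => deriv (faaDiBrunoCoeff φ p q) z * iteratedDeriv q f (φ z)),
        sum_range_succ _ (p + 1), faaDiBrunoCoeff_eq_zero_of_lt (Nat.lt_succ_self p)]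
      simp
    simp only [faaDiBrunoCoeff, Pi.add_apply, Pi.mul_apply, add_mul, sum_add_distrib]
    rw [hshift]
    ring

theorem iteratedDeriv_comp_eq_sum_range_of_lt (hφ : ContDiff 𝕜 ∞ φ) {f : 𝕜 → 𝕜}
    (hf : ContDiff 𝕜 ∞ f) {p n : ℕ} (hpn : p < n) (z : 𝕜) :
    iteratedDeriv p (f ∘ φ) z
      = ∑ q ∈ range n, faaDiBrunoCoeff φ p q z * iteratedDeriv q f (φ z) := by
  rw [iteratedDeriv_comp_eq_sum hφ hf]
  refine sum_subset (range_subset_range.2 hpn) fun q _ hq => ?_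
  simp [faaDiBrunoCoeff_eq_zero_of_lt (by simpa using hq : p < q)]

variable {n : ℕ}

noncomputable def wronskianMatrix (f : Fin n → 𝕜 → 𝕜) (z : 𝕜) : Matrix (Fin n) (Fin n) 𝕜 :=
  Matrix.of fun p i => iteratedDeriv p (f i) z

noncomputable def faaDiBrunoMatrix (φ : 𝕜 → 𝕜) (n : ℕ) (z : 𝕜) : Matrix (Fin n) (Fin n) 𝕜 :=
  Matrix.of fun p q => faaDiBrunoCoeff φ p q z

theorem faaDiBrunoMatrix_isLowerTriangular (z : 𝕜) :
    (faaDiBrunoMatrix φ n z).IsLowerTriangular := fun p q hpq => by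
  have hpq : (p : ℕ) < q := hpq
  simp [faaDiBrunoMatrix, faaDiBrunoCoeff_eq_zero_of_lt hpq]

theorem det_faaDiBrunoMatrix (k : ℕ) (z : 𝕜) :
    (faaDiBrunoMatrix φ (k + 1) z).det = deriv φ z ^ (k * (k + 1) / 2) := by
  rw [Matrix.det_of_isLowerTriangular _ (faaDiBrunoMatrix_isLowerTriangular z)]
  simp only [faaDiBrunoMatrix, Matrix.of_apply, faaDiBrunoCoeff_self, Pi.pow_apply]
  rw [prod_pow_eq_pow_sum, Fin.sum_univ_eq_sum_range (fun p => p), sum_range_id,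
    Nat.add_sub_cancel, Nat.mul_comm]

theorem wronskianMatrix_comp (hφ : ContDiff 𝕜 ∞ φ) {f : Fin n → 𝕜 → 𝕜}
    (hf : ∀ i, ContDiff 𝕜 ∞ (f i)) (z : 𝕜) :
    wronskianMatrix (fun i => f i ∘ φ) z = faaDiBrunoMatrix φ n z * wronskianMatrix f (φ z) := by
  ext p i
  rw [Matrix.mul_apply, wronskianMatrix, Matrix.of_apply,
    iteratedDeriv_comp_eq_sum_range_of_lt hφ (hf i) p.isLt,
    ← Fin.sum_univ_eq_sum_range (fun q => faaDiBrunoCoeff φ p q z * iteratedDeriv q (f i) (φ z))]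
  rfl

theorem det_wronskianMatrix_comp (hφ : ContDiff 𝕜 ∞ φ) {k : ℕ} {f : Fin (k + 1) → 𝕜 → 𝕜}
    (hf : ∀ i, ContDiff 𝕜 ∞ (f i)) (z : 𝕜) :
    (wronskianMatrix (fun i => f i ∘ φ) z).det
      = deriv φ z ^ (k * (k + 1) / 2) * (wronskianMatrix f (φ z)).det := by
  rw [wronskianMatrix_comp hφ hf, Matrix.det_mul, det_faaDiBrunoMatrix]

theorem wronskian_comp_reparam_general (k : ℕ) (φ : ℂ → ℂ) (hφ : Differentiable ℂ φ)
    (f : Fin (k + 1) → ℂ → ℂ) (hf : ∀ i, Differentiable ℂ (f i)) :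
    Matrix.det (fun p i : Fin (k + 1) => iteratedDeriv (p : ℕ) (f i ∘ φ) 0)
      = (deriv φ 0) ^ (k * (k + 1) / 2) *
        Matrix.det (fun p i : Fin (k + 1) => iteratedDeriv (p : ℕ) (f i) (φ 0)) :=
  det_wronskianMatrix_comp hφ.contDiff (fun i => (hf i).contDiff) 0

/-- For a holomorphic reparametrization `φ` with `φ 0 = 0`, the Wronskian of
`f₀∘φ, …, f_k∘φ` at `0` equals `φ'(0)^{k(k+1)/2}` times the Wronskian of the `f_i` at
`φ 0 = 0`. -/
theorem wronskian_comp_reparam (k : ℕ) (φ : ℂ → ℂ) (hφ : Differentiable ℂ φ)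
    (hφ0 : φ 0 = 0) (f : Fin (k + 1) → ℂ → ℂ) (hf : ∀ i, Differentiable ℂ (f i)) :
    Matrix.det (fun p i : Fin (k + 1) => iteratedDeriv (p : ℕ) (f i ∘ φ) 0)
      = (deriv φ 0) ^ (k * (k + 1) / 2) *
        Matrix.det (fun p i : Fin (k + 1) => iteratedDeriv (p : ℕ) (f i) (φ 0)) :=
  wronskian_comp_reparam_general k φ hφ f hf
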